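/- arXiv:2511.09363 — 7 statements merged into one kernel-verified Lean document; each statement's English description precedes it below -/
import Mathlib

section
/- Let n be a natural number, let f : ℝⁿ → ℝⁿ be continuous, and let B : ℝⁿ → ℝ be continuously differentiable. Suppose that for every y ∈ ℝⁿ with B(y) = 0 one has ⟨∇B(y), f(y)⟩ < 0, where ∇B denotes the gradient of B. Let x : ℝ → ℝⁿ be differentiable with x'(t) = f(x(t)) for all t ≥ 0, and suppose B(x(0)) ≤ 0. Then B(x(t)) ≤ 0 for all t ≥ 0. -/
/-!
By the chain rule `t ↦ B (x t)` has derivative `⟪∇B (x t), f (x t)⟫`, which is negative whenever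
`B (x t) = 0`; so this function can never cross the level `0` upwards, which is the fencing
comparison `image_le_of_deriv_right_lt_deriv_boundary'` against the constant `0`.
-/

theorem HasGradientAt.hasDerivAt_comp {F : Type*} [NormedAddCommGroup F] [InnerProductSpace ℝ F]
    [CompleteSpace F] {B : F → ℝ} {b v : F} {x : ℝ → F} {t : ℝ}
    (hB : HasGradientAt B b (x t)) (hx : HasDerivAt x v t) :
    HasDerivAt (fun s => B (x s)) (inner ℝ b v) t :=
  hB.hasFDerivAt.comp_hasDerivAt t hx

theorem nonpos_of_hasDerivAt_neg_of_eq_zero {g g' : ℝ → ℝ} {a : ℝ}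
    (hg : ∀ t, a ≤ t → HasDerivAt g (g' t) t) (hbarrier : ∀ t, a ≤ t → g t = 0 → g' t < 0)
    (ha : g a ≤ 0) : ∀ t, a ≤ t → g t ≤ 0 := by
  intro t hat
  exact image_le_of_deriv_right_lt_deriv_boundary' (B := fun _ => 0) (B' := fun _ => 0)
    (fun s hs => (hg s hs.1).continuousAt.continuousWithinAt)
    (fun s hs => (hg s hs.1).hasDerivWithinAt) ha continuousOn_const
    (fun _ _ => hasDerivWithinAt_const _ _ _) (fun s hs => hbarrier s hs.1) ⟨hat, le_rfl⟩

theorem continuous_barrier_sublevel_invariant_general (n : ℕ)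
    (f : EuclideanSpace ℝ (Fin n) → EuclideanSpace ℝ (Fin n))
    (B : EuclideanSpace ℝ (Fin n) → ℝ)
    (hB : ContDiff ℝ 1 B)
    (hLie : ∀ y : EuclideanSpace ℝ (Fin n), B y = 0 →
      (inner ℝ (gradient B y) (f y) : ℝ) < 0)
    (x : ℝ → EuclideanSpace ℝ (Fin n))
    (hx : Differentiable ℝ x)
    (hode : ∀ t : ℝ, 0 ≤ t → deriv x t = f (x t))
    (h0 : B (x 0) ≤ 0) :
    ∀ t : ℝ, 0 ≤ t → B (x t) ≤ 0 := by
  have hBdiff : Differentiable ℝ B := hB.differentiable one_ne_zero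
  have hderiv (t : ℝ) (ht : 0 ≤ t) :
      HasDerivAt (fun s => B (x s)) (inner ℝ (gradient B (x t)) (f (x t))) t := by
    refine (hBdiff (x t)).hasGradientAt.hasDerivAt_comp ?_
    simpa only [hode t ht] using (hx t).hasDerivAt
  exact nonpos_of_hasDerivAt_neg_of_eq_zero hderiv (fun t _ => hLie (x t)) h0

theorem continuous_barrier_sublevel_invariant (n : ℕ)
    (f : EuclideanSpace ℝ (Fin n) → EuclideanSpace ℝ (Fin n))
    (hf : Continuous f)
    (B : EuclideanSpace ℝ (Fin n) → ℝ)
    (hB : ContDiff ℝ 1 B)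
    (hLie : ∀ y : EuclideanSpace ℝ (Fin n), B y = 0 →
      (inner ℝ (gradient B y) (f y) : ℝ) < 0)
    (x : ℝ → EuclideanSpace ℝ (Fin n))
    (hx : Differentiable ℝ x)
    (hode : ∀ t : ℝ, 0 ≤ t → deriv x t = f (x t))
    (h0 : B (x 0) ≤ 0) :
    ∀ t : ℝ, 0 ≤ t → B (x t) ≤ 0 :=
  continuous_barrier_sublevel_invariant_general n f B hB hLie x hx hode h0
end

section
/- Let n be a natural number, let f : ℝⁿ → ℝⁿ be continuous, let X_I and X_U be subsets of ℝⁿ, and let B : ℝⁿ → ℝ be continuously differentiable. Suppose (i) B(x) ≤ 0 for every x ∈ X_I, (ii) B(x) > 0 for every x ∈ X_U, and (iii) ⟨∇B(y), f(y)⟩ < 0 for every y ∈ ℝⁿ with B(y) = 0. Then the continuous-time system is safe: for every differentiable solution x : ℝ → ℝⁿ with x'(t) = f(x(t)) for all t ≥ 0 and x(0) ∈ X_I, one has x(t) ∉ X_U for all t ≥ 0. -/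
/-! Along a solution, `B ∘ x` starts nonpositive and has negative derivative whenever it
vanishes, so it can never cross zero upwards: compare it with the zero function by the fencing
theorem `image_le_of_deriv_right_lt_deriv_boundary'`. -/

section

variable {E : Type*} [NormedAddCommGroup E] [InnerProductSpace ℝ E] [CompleteSpace E]

theorem HasGradientAt.comp_hasDerivAt {B : E → ℝ} {B' : E} {x : ℝ → E} {v : E} {t : ℝ}
    (hB : HasGradientAt B B' (x t)) (hx : HasDerivAt x v t) :
    HasDerivAt (B ∘ x) (inner ℝ B' v) t := by
  simpa using hB.hasFDerivAt.comp_hasDerivAt t hx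

theorem barrier_nonpos_along_trajectory {f : E → E} {B : E → ℝ} (hB : Differentiable ℝ B)
    (hLie : ∀ y, B y = 0 → inner ℝ (gradient B y) (f y) < 0)
    {x : ℝ → E} (hx : ∀ t, 0 ≤ t → HasDerivAt x (f (x t)) t) (hx0 : B (x 0) ≤ 0)
    {t : ℝ} (ht : 0 ≤ t) : B (x t) ≤ 0 := by
  have hBx : ∀ s, 0 ≤ s → HasDerivAt (B ∘ x) (inner ℝ (gradient B (x s)) (f (x s))) s :=
    fun s hs => (hB (x s)).hasGradientAt.comp_hasDerivAt (hx s hs)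
  exact image_le_of_deriv_right_lt_deriv_boundary' (f := B ∘ x) (B := fun _ => 0)
    (fun s hs => (hBx s hs.1).continuousAt.continuousWithinAt)
    (fun s hs => (hBx s hs.1).hasDerivWithinAt) hx0 continuousOn_const
    (fun _ _ => hasDerivWithinAt_const _ _ _) (fun s _ hs => hLie _ hs) ⟨ht, le_rfl⟩

end

theorem continuous_barrier_safety_general (n : ℕ)
    (f : EuclideanSpace ℝ (Fin n) → EuclideanSpace ℝ (Fin n))
    (X_I X_U : Set (EuclideanSpace ℝ (Fin n)))
    (B : EuclideanSpace ℝ (Fin n) → ℝ)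
    (hB : ContDiff ℝ 1 B)
    (hInit : ∀ x ∈ X_I, B x ≤ 0)
    (hUnsafe : ∀ x ∈ X_U, 0 < B x)
    (hLie : ∀ y : EuclideanSpace ℝ (Fin n), B y = 0 →
      (inner ℝ (gradient B y) (f y) : ℝ) < 0) :
    ∀ x : ℝ → EuclideanSpace ℝ (Fin n), Differentiable ℝ x →
      (∀ t : ℝ, 0 ≤ t → deriv x t = f (x t)) → x 0 ∈ X_I →
      ∀ t : ℝ, 0 ≤ t → x t ∉ X_U := by
  intro x hx hode hx0 t ht hxt
  have hsol : ∀ s, 0 ≤ s → HasDerivAt x (f (x s)) s :=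
    fun s hs => hode s hs ▸ (hx s).hasDerivAt
  exact (hUnsafe _ hxt).not_ge <|
    barrier_nonpos_along_trajectory (hB.differentiable one_ne_zero) hLie hsol (hInit _ hx0) ht

theorem continuous_barrier_safety (n : ℕ)
    (f : EuclideanSpace ℝ (Fin n) → EuclideanSpace ℝ (Fin n))
    (hf : Continuous f)
    (X_I X_U : Set (EuclideanSpace ℝ (Fin n)))
    (B : EuclideanSpace ℝ (Fin n) → ℝ)
    (hB : ContDiff ℝ 1 B)
    (hInit : ∀ x ∈ X_I, B x ≤ 0)
    (hUnsafe : ∀ x ∈ X_U, 0 < B x)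
    (hLie : ∀ y : EuclideanSpace ℝ (Fin n), B y = 0 →
      (inner ℝ (gradient B y) (f y) : ℝ) < 0) :
    ∀ x : ℝ → EuclideanSpace ℝ (Fin n), Differentiable ℝ x →
      (∀ t : ℝ, 0 ≤ t → deriv x t = f (x t)) → x 0 ∈ X_I →
      ∀ t : ℝ, 0 ≤ t → x t ∉ X_U :=
  continuous_barrier_safety_general n f X_I X_U B hB hInit hUnsafe hLie
end

section
/- Define f : ℝ² → ℝ² by f(x₁, x₂) = (x₁ + 0.01(−100x₁ − x₂), x₂ + 0.01(x₁ − 100x₂)). Then for every initial point (a, b) with 0.1 ≤ a ≤ 0.4 and 0.1 ≤ b ≤ 0.55 and every k ∈ ℕ, the iterate f^[k](a, b) does not lie in the set [0.45, 0.5] × [0.6, 1.0]; i.e., writing f^[k](a,b) = (y₁, y₂), it is not the case that 0.45 ≤ y₁ ≤ 0.5 and 0.6 ≤ y₂ ≤ 1.0. -/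
noncomputable def fmap : ℝ × ℝ → ℝ × ℝ :=
  fun p => (p.1 + 0.01 * (-100 * p.1 - p.2), p.2 + 0.01 * (p.1 - 100 * p.2))

lemma fmap_norm_bound (a b : ℝ)
    (hal : 0.1 ≤ a) (hau : a ≤ 0.4)
    (hbl : 0.1 ≤ b) (hbu : b ≤ 0.55) (k : ℕ) :
    (fmap^[k] (a, b)).1 ^ 2 + (fmap^[k] (a, b)).2 ^ 2 ≤ 0.4625 := by
  induction k with
  | zero => simp; nlinarith
  | succ n ih =>
    rw [Function.iterate_succ_apply']
    set p := fmap^[n] (a, b)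
    show (p.1 + 0.01 * (-100 * p.1 - p.2)) ^ 2 + (p.2 + 0.01 * (p.1 - 100 * p.2)) ^ 2 ≤ 0.4625
    nlinarith [sq_nonneg p.1, sq_nonneg p.2]

theorem discrete_system_safety (a b : ℝ)
    (hal : 0.1 ≤ a) (hau : a ≤ 0.4)
    (hbl : 0.1 ≤ b) (hbu : b ≤ 0.55) (k : ℕ) :
    ¬(0.45 ≤ (fmap^[k] (a, b)).1 ∧ (fmap^[k] (a, b)).1 ≤ 0.5 ∧
      0.6 ≤ (fmap^[k] (a, b)).2 ∧ (fmap^[k] (a, b)).2 ≤ 1.0) := by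
  rintro ⟨h1, h2, h3, h4⟩
  have := fmap_norm_bound a b hal hau hbl hbu k
  nlinarith
end

section
/- For all real numbers x₁, x₂, x₃, x₄ satisfying (x₁ − 4.5)² + (x₂ − 1.5)² + x₃² + x₄² = 25, one has 2(x₁ − 4.5)(−x₁ + 4.5) + 2(x₂ − 1.5)(x₁ − x₂ − 3) + 2x₃(−0.5x₃) + 2x₄(−0.3x₄) < 0. -/
theorem lie_derivative_negative_on_level_set (x₁ x₂ x₃ x₄ : ℝ)
    (hlevel : (x₁ - 4.5) ^ 2 + (x₂ - 1.5) ^ 2 + x₃ ^ 2 + x₄ ^ 2 = 25) :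
    2 * (x₁ - 4.5) * (-x₁ + 4.5) + 2 * (x₂ - 1.5) * (x₁ - x₂ - 3) +
      2 * x₃ * (-0.5 * x₃) + 2 * x₄ * (-0.3 * x₄) < 0 := by
  nlinarith [sq_nonneg (x₁ - x₂ - 3), sq_nonneg (x₁ - 4.5), sq_nonneg (x₂ - 1.5), sq_nonneg x₃, sq_nonneg x₄]
end

section
/- Let x : ℝ → ℝ⁴ be differentiable with components (x₁, x₂, x₃, x₄) satisfying x₁'(t) = −x₁(t) + 4.5, x₂'(t) = x₁(t) − x₂(t) − 3, x₃'(t) = −0.5x₃(t), x₄'(t) = −0.3x₄(t) for all t ≥ 0. If x(0) lies in the rectangle [1.75, 2.25] × [1.75, 2.25] × [−0.1, 0.1] × [−0.1, 0.1], then for every t ≥ 0 the point x(t) does not lie in the rectangle [9, 10] × [9, 10] × [−5, 5] × [−5, 5]. -/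
theorem continuous_linear_system_safety (x₁ x₂ x₃ x₄ : ℝ → ℝ)
    (hd₁ : Differentiable ℝ x₁) (hd₂ : Differentiable ℝ x₂)
    (hd₃ : Differentiable ℝ x₃) (hd₄ : Differentiable ℝ x₄)
    (hode₁ : ∀ t : ℝ, 0 ≤ t → deriv x₁ t = -x₁ t + 4.5)
    (hode₂ : ∀ t : ℝ, 0 ≤ t → deriv x₂ t = x₁ t - x₂ t - 3)
    (hode₃ : ∀ t : ℝ, 0 ≤ t → deriv x₃ t = -0.5 * x₃ t)
    (hode₄ : ∀ t : ℝ, 0 ≤ t → deriv x₄ t = -0.3 * x₄ t)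
    (hinit : 1.75 ≤ x₁ 0 ∧ x₁ 0 ≤ 2.25 ∧ 1.75 ≤ x₂ 0 ∧ x₂ 0 ≤ 2.25 ∧
      -0.1 ≤ x₃ 0 ∧ x₃ 0 ≤ 0.1 ∧ -0.1 ≤ x₄ 0 ∧ x₄ 0 ≤ 0.1) :
    ∀ t : ℝ, 0 ≤ t →
      ¬(9 ≤ x₁ t ∧ x₁ t ≤ 10 ∧ 9 ≤ x₂ t ∧ x₂ t ≤ 10 ∧
        -5 ≤ x₃ t ∧ x₃ t ≤ 5 ∧ -5 ≤ x₄ t ∧ x₄ t ≤ 5) := by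
  intro t ht hbad
  set g : ℝ → ℝ := fun s => (x₁ s - 4.5) * Real.exp s with hg
  have hgd : Differentiable ℝ g := (hd₁.sub_const 4.5).mul Real.differentiable_exp
  have hderiv : ∀ s : ℝ, 0 ≤ s → deriv g s = 0 := by
    intro s hs
    have h1 : HasDerivAt x₁ (deriv x₁ s) s := (hd₁ s).hasDerivAt
    have h2 : HasDerivAt (fun u => x₁ u - 4.5) (deriv x₁ s) s := h1.sub_const 4.5
    have h3 : HasDerivAt g (deriv x₁ s * Real.exp s + (x₁ s - 4.5) * Real.exp s) s :=
      h2.mul (Real.hasDerivAt_exp s)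
    rw [h3.deriv, hode₁ s hs]
    ring
  have hanti : AntitoneOn g (Set.Ici (0:ℝ)) := by
    apply antitoneOn_of_deriv_nonpos (convex_Ici 0) hgd.continuous.continuousOn
      (hgd.differentiableOn)
    intro s hs
    rw [hderiv s (le_of_lt (by simpa using hs))]
  have hgt : g t ≤ g 0 := hanti (Set.self_mem_Ici) ht ht
  have hg0 : g 0 = x₁ 0 - 4.5 := by simp [hg]
  have hx10 : x₁ 0 ≤ 2.25 := hinit.2.1
  have hgtneg : g t ≤ -2.25 := by
    rw [hg0] at hgt; linarith
  have hexp : 0 < Real.exp t := Real.exp_pos t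
  have : x₁ t - 4.5 ≤ 0 := by
    by_contra h
    push_neg at h
    have : 0 < g t := mul_pos (by linarith) hexp
    linarith
  have h9 : 9 ≤ x₁ t := hbad.1
  linarith
end

section
/- Let x : ℝ → ℝ⁴ be differentiable with components (x₁, x₂, x₃, x₄) satisfying the closed-loop equations x₁'(t) = −3x₁(t) − 0.5x₂(t), x₂'(t) = −0.15·sin(x₁(t)) − 3.02x₂(t) + 0.01x₃(t), x₃'(t) = −3.1x₃(t) − 0.03x₁(t), x₄'(t) = −3.03x₄(t) − 0.01x₂(t) for all t ≥ 0. If x₁(0)² + x₂(0)² + x₃(0)² + x₄(0)² ≤ 0.09, then for every t ≥ 0 one has x₁(t)² + x₂(t)² + x₃(t)² + x₄(t)² ≤ 6.25; i.e., the trajectory never enters the unsafe set consisting of all points outside the closed ball of radius 2.5 centered at the origin. -/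
/-!
The squared norm `x₁² + x₂² + x₃² + x₄²` is non-increasing along every trajectory, not only
near the barrier level set: its rate of change is `2⟨x, f(x)⟩`, and the strongly dissipative
diagonal of `f` dominates the small couplings, including the `sin` term since `|sin a| ≤ |a|`.
Hence the trajectory stays in the ball of radius `0.3` it starts in.
-/

open Real

lemma abs_mul_sin_le_abs_mul (a b : ℝ) : |b * sin a| ≤ |a * b| := by
  rw [abs_mul, abs_mul, mul_comm |a|]
  exact mul_le_mul_of_nonneg_left abs_sin_le_abs (abs_nonneg b)

/-- Each cross term is absorbed by the diagonal through `2|uv| ≤ u² + v²`. -/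
lemma closedLoop_energy_rate_nonpos (a b c d : ℝ) :
    a * (-3 * a - 0.5 * b) + b * (-0.15 * sin a - 3.02 * b + 0.01 * c)
      + c * (-3.1 * c - 0.03 * a) + d * (-3.03 * d - 0.01 * b) ≤ 0 := by
  have hsin := abs_mul_sin_le_abs_mul a b
  have hab : |a * b| ≤ (a ^ 2 + b ^ 2) / 2 := by
    rw [abs_mul]
    nlinarith [sq_nonneg (|a| - |b|), sq_abs a, sq_abs b]
  nlinarith [neg_abs_le (b * sin a), sq_nonneg (a - b), sq_nonneg (a + b), sq_nonneg (b - c),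
    sq_nonneg (b + c), sq_nonneg (a - c), sq_nonneg (a + c), sq_nonneg (b - d), sq_nonneg (b + d)]

theorem sum_sq_le_sum_sq_zero_of_sum_mul_deriv_nonpos {ι : Type*} [Fintype ι] {x : ι → ℝ → ℝ}
    (hd : ∀ i, Differentiable ℝ (x i))
    (hrate : ∀ t, 0 < t → ∑ i, x i t * deriv (x i) t ≤ 0) {t : ℝ} (ht : 0 ≤ t) :
    ∑ i, x i t ^ 2 ≤ ∑ i, x i 0 ^ 2 := by
  set V : ℝ → ℝ := fun t => ∑ i, x i t ^ 2
  have hV : ∀ s, HasDerivAt V (2 * ∑ i, x i s * deriv (x i) s) s := fun s => by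
    refine (HasDerivAt.fun_sum fun i _ => (hd i s).hasDerivAt.fun_pow 2).congr_deriv ?_
    rw [Finset.mul_sum]
    refine Finset.sum_congr rfl fun i _ => ?_
    norm_num
    ring
  have hVdiff : Differentiable ℝ V := fun s => (hV s).differentiableAt
  have hanti : AntitoneOn V (Set.Ici 0) := by
    refine antitoneOn_of_deriv_nonpos (convex_Ici 0) hVdiff.continuous.continuousOn
      hVdiff.differentiableOn fun s hs => ?_
    rw [interior_Ici] at hs
    rw [(hV s).deriv]
    linarith [hrate s hs]
  exact hanti Set.self_mem_Ici ht ht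

theorem closed_loop_system_safety (x₁ x₂ x₃ x₄ : ℝ → ℝ)
    (hd₁ : Differentiable ℝ x₁) (hd₂ : Differentiable ℝ x₂)
    (hd₃ : Differentiable ℝ x₃) (hd₄ : Differentiable ℝ x₄)
    (hode₁ : ∀ t : ℝ, 0 ≤ t → deriv x₁ t = -3 * x₁ t - 0.5 * x₂ t)
    (hode₂ : ∀ t : ℝ, 0 ≤ t →
      deriv x₂ t = -0.15 * Real.sin (x₁ t) - 3.02 * x₂ t + 0.01 * x₃ t)
    (hode₃ : ∀ t : ℝ, 0 ≤ t → deriv x₃ t = -3.1 * x₃ t - 0.03 * x₁ t)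
    (hode₄ : ∀ t : ℝ, 0 ≤ t → deriv x₄ t = -3.03 * x₄ t - 0.01 * x₂ t)
    (hinit : (x₁ 0) ^ 2 + (x₂ 0) ^ 2 + (x₃ 0) ^ 2 + (x₄ 0) ^ 2 ≤ 0.09) :
    ∀ t : ℝ, 0 ≤ t →
      (x₁ t) ^ 2 + (x₂ t) ^ 2 + (x₃ t) ^ 2 + (x₄ t) ^ 2 ≤ 6.25 := by
  intro t ht
  have hd : ∀ i, Differentiable ℝ (![x₁, x₂, x₃, x₄] i) := by
    intro i; fin_cases i <;> assumption
  have hrate : ∀ s, 0 < s → ∑ i, ![x₁, x₂, x₃, x₄] i s * deriv (![x₁, x₂, x₃, x₄] i) s ≤ 0 := by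
    intro s hs
    simp only [Fin.sum_univ_four, Matrix.cons_val]
    rw [hode₁ s hs.le, hode₂ s hs.le, hode₃ s hs.le, hode₄ s hs.le]
    exact closedLoop_energy_rate_nonpos _ _ _ _
  have hbound := sum_sq_le_sum_sq_zero_of_sum_mul_deriv_nonpos hd hrate ht
  simp only [Fin.sum_univ_four, Matrix.cons_val] at hbound
  linarith
end

section
/- For all real numbers x₁, x₂, x₃, x₄ with x₁² + x₂² + x₃² + x₄² = 4, one has 2x₁(−3x₁ − 0.5x₂) + 2x₂(−0.15·sin(x₁) − 3.02x₂ + 0.01x₃) + 2x₃(−3.1x₃ − 0.03x₁) + 2x₄(−3.03x₄ − 0.01x₂) ≤ −6(x₁² + x₂² + x₃² + x₄²) + |x₁x₂| + 0.3|x₂| + 0.02|x₂x₃| + 0.06|x₁x₃| + 0.02|x₂x₄| ≤ −24 + 2 + 0.6 + 0.04 + 0.12 + 0.04 < 0. -/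
theorem closed_loop_lie_derivative_bound (x₁ x₂ x₃ x₄ : ℝ)
    (hsphere : x₁ ^ 2 + x₂ ^ 2 + x₃ ^ 2 + x₄ ^ 2 = 4) :
    (2 * x₁ * (-3 * x₁ - 0.5 * x₂) +
        2 * x₂ * (-0.15 * Real.sin x₁ - 3.02 * x₂ + 0.01 * x₃) +
        2 * x₃ * (-3.1 * x₃ - 0.03 * x₁) +
        2 * x₄ * (-3.03 * x₄ - 0.01 * x₂) ≤
      -6 * (x₁ ^ 2 + x₂ ^ 2 + x₃ ^ 2 + x₄ ^ 2) + |x₁ * x₂| + 0.3 * |x₂| +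
        0.02 * |x₂ * x₃| + 0.06 * |x₁ * x₃| + 0.02 * |x₂ * x₄|) ∧
    (-6 * (x₁ ^ 2 + x₂ ^ 2 + x₃ ^ 2 + x₄ ^ 2) + |x₁ * x₂| + 0.3 * |x₂| +
        0.02 * |x₂ * x₃| + 0.06 * |x₁ * x₃| + 0.02 * |x₂ * x₄| ≤
      -24 + 2 + 0.6 + 0.04 + 0.12 + 0.04) ∧
    ((-24 : ℝ) + 2 + 0.6 + 0.04 + 0.12 + 0.04 < 0) := by
  have hsin : |x₂ * Real.sin x₁| ≤ |x₂| := by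
    rw [abs_mul]
    calc |x₂| * |Real.sin x₁| ≤ |x₂| * 1 :=
          mul_le_mul_of_nonneg_left (abs_le.mpr ⟨Real.neg_one_le_sin x₁, Real.sin_le_one x₁⟩) (abs_nonneg _)
      _ = |x₂| := mul_one _
  have hsin' : -(x₂ * Real.sin x₁) ≤ |x₂| := (abs_le.mp hsin).1 |> neg_le.mp |>.trans (le_refl _) |>.trans (le_refl _)
  refine ⟨?_, ?_, by norm_num⟩
  · nlinarith [neg_abs_le (x₁ * x₂), neg_abs_le (x₂ * x₃), le_abs_self (x₂ * x₃),
      neg_abs_le (x₁ * x₃), neg_abs_le (x₂ * x₄), hsin', sq_nonneg x₂, sq_nonneg x₃, sq_nonneg x₄]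
  · have h12 : |x₁ * x₂| ≤ 2 := by
      rw [abs_mul]; nlinarith [sq_abs x₁, sq_abs x₂, sq_nonneg (|x₁| - |x₂|), sq_nonneg x₃, sq_nonneg x₄]
    have h23 : |x₂ * x₃| ≤ 2 := by
      rw [abs_mul]; nlinarith [sq_abs x₂, sq_abs x₃, sq_nonneg (|x₂| - |x₃|), sq_nonneg x₁, sq_nonneg x₄]
    have h13 : |x₁ * x₃| ≤ 2 := by
      rw [abs_mul]; nlinarith [sq_abs x₁, sq_abs x₃, sq_nonneg (|x₁| - |x₃|), sq_nonneg x₂, sq_nonneg x₄]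
    have h24 : |x₂ * x₄| ≤ 2 := by
      rw [abs_mul]; nlinarith [sq_abs x₂, sq_abs x₄, sq_nonneg (|x₂| - |x₄|), sq_nonneg x₁, sq_nonneg x₃]
    have h2 : |x₂| ≤ 2 := by
      nlinarith [sq_abs x₂, abs_nonneg x₂, sq_nonneg x₁, sq_nonneg x₃, sq_nonneg x₄]
    linarith [hsphere]
end
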